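/- arXiv:2202.06859 — 3 statements merged into one kernel-verified Lean document; each statement's English description precedes it below -/
import Mathlib

section
/- For every real C > 27, the equation C r⁴ = (1+2r²)³ has exactly two positive solutions r₁ and r₂, satisfying 0 < r₁ < 1 < r₂. -/
/-!
A positive `r` solves `C r⁴ = (1 + 2r²)³` exactly when `C = (1 + 2r²)³ / r⁴`. The right-hand
side has derivative `4 (1 + 2r²)² (r² - 1) / r⁵`, so it decreases strictly on `(0, 1]` and
increases strictly on `[1, ∞)`, with minimum value `27` at `r = 1`; it is at least `r⁻⁴` and at
least `8r²`, so it exceeds `C` at `r = C⁻¹` and at `r = C`. The intermediate value theorem on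
`[C⁻¹, 1]` and `[1, C]` gives the two roots, and strict monotonicity on each side gives uniqueness.
-/

open Set

noncomputable def profileConstant (r : ℝ) : ℝ := (1 + 2 * r ^ 2) ^ 3 / r ^ 4

lemma profileConstant_one : profileConstant 1 = 27 := by
  norm_num [profileConstant]

lemma profileConstant_eq_iff {C r : ℝ} (hr : r ≠ 0) :
    profileConstant r = C ↔ C * r ^ 4 = (1 + 2 * r ^ 2) ^ 3 := by
  rw [profileConstant, div_eq_iff (pow_ne_zero 4 hr), eq_comm]

lemma inv_pow_four_le_profileConstant {r : ℝ} (hr : r ≠ 0) :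
    (r ^ 4)⁻¹ ≤ profileConstant r := by
  rw [profileConstant, div_eq_mul_inv]
  have h : 1 ≤ (1 + 2 * r ^ 2) ^ 3 := one_le_pow₀ (by nlinarith [sq_nonneg r])
  exact le_mul_of_one_le_left (by positivity) h

lemma eight_mul_sq_le_profileConstant {r : ℝ} (hr : r ≠ 0) :
    8 * r ^ 2 ≤ profileConstant r := by
  rw [profileConstant, le_div_iff₀ (by positivity)]
  calc 8 * r ^ 2 * r ^ 4 = (2 * r ^ 2) ^ 3 := by ring
    _ ≤ (1 + 2 * r ^ 2) ^ 3 := by gcongr; linarith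

lemma hasDerivAt_profileConstant {r : ℝ} (hr : r ≠ 0) :
    HasDerivAt profileConstant (4 * (1 + 2 * r ^ 2) ^ 2 * (r ^ 2 - 1) / r ^ 5) r := by
  have hnum : HasDerivAt (fun r : ℝ => (1 + 2 * r ^ 2) ^ 3) (12 * r * (1 + 2 * r ^ 2) ^ 2) r := by
    refine ((((hasDerivAt_pow 2 r).const_mul 2).const_add 1).pow 3).congr_deriv ?_
    ring
  have hden : HasDerivAt (fun r : ℝ => r ^ 4) (4 * r ^ 3) r := by
    simpa using hasDerivAt_pow 4 r
  refine (hnum.div hden (pow_ne_zero 4 hr)).congr_deriv ?_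
  field_simp
  ring

lemma continuousOn_profileConstant : ContinuousOn profileConstant (Ioi 0) := fun _ hr =>
  (hasDerivAt_profileConstant (ne_of_gt hr)).continuousAt.continuousWithinAt

lemma strictAntiOn_profileConstant : StrictAntiOn profileConstant (Ioc 0 1) := by
  refine strictAntiOn_of_deriv_neg (convex_Ioc 0 1)
    (continuousOn_profileConstant.mono Ioc_subset_Ioi_self) fun r hr => ?_
  rw [interior_Ioc] at hr
  obtain ⟨hr0, hr1⟩ := hr
  rw [(hasDerivAt_profileConstant hr0.ne').deriv]
  have : r ^ 2 - 1 < 0 := by nlinarith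
  exact div_neg_of_neg_of_pos (mul_neg_of_pos_of_neg (by positivity) this) (by positivity)

lemma strictMonoOn_profileConstant : StrictMonoOn profileConstant (Ici 1) := by
  refine strictMonoOn_of_deriv_pos (convex_Ici 1)
    (continuousOn_profileConstant.mono fun r (hr : 1 ≤ r) => zero_lt_one.trans_le hr)
    fun r hr => ?_
  rw [interior_Ici] at hr
  have hr1 : 1 < r := hr
  rw [(hasDerivAt_profileConstant (by positivity)).deriv]
  have : 0 < r ^ 2 - 1 := by nlinarith
  positivity

lemma exists_lt_one_profileConstant_eq {C : ℝ} (hC : 27 < C) :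
    ∃ r, 0 < r ∧ r < 1 ∧ profileConstant r = C := by
  have hC0 : 0 < C := by linarith
  have hCinv : C⁻¹ ≤ 1 := inv_le_one_of_one_le₀ (by linarith)
  have hlow : C ≤ profileConstant C⁻¹ := by
    calc C ≤ C ^ 4 := le_self_pow₀ (by linarith) (by norm_num)
      _ = ((C⁻¹) ^ 4)⁻¹ := by rw [inv_pow, inv_inv]
      _ ≤ profileConstant C⁻¹ := inv_pow_four_le_profileConstant (inv_ne_zero hC0.ne')
  obtain ⟨r, ⟨hr0, hr1⟩, hr⟩ := intermediate_value_Icc' hCinv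
    (continuousOn_profileConstant.mono fun r hr => (inv_pos.2 hC0).trans_le hr.1)
    ⟨profileConstant_one ▸ hC.le, hlow⟩
  refine ⟨r, (inv_pos.2 hC0).trans_le hr0, hr1.lt_of_ne ?_, hr⟩
  rintro rfl
  exact hC.ne (profileConstant_one ▸ hr)

lemma exists_one_lt_profileConstant_eq {C : ℝ} (hC : 27 < C) :
    ∃ r, 1 < r ∧ profileConstant r = C := by
  have hC1 : 1 ≤ C := by linarith
  have hhigh : C ≤ profileConstant C := by
    calc C ≤ 8 * C ^ 2 := by nlinarith
      _ ≤ profileConstant C := eight_mul_sq_le_profileConstant (by positivity)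
  obtain ⟨r, ⟨hr1, -⟩, hr⟩ := intermediate_value_Icc hC1
    (continuousOn_profileConstant.mono fun r hr => zero_lt_one.trans_le hr.1)
    ⟨profileConstant_one ▸ hC.le, hhigh⟩
  refine ⟨r, hr1.lt_of_ne' ?_, hr⟩
  rintro rfl
  exact hC.ne (profileConstant_one ▸ hr)

theorem two_positive_roots (C : ℝ) (hC : 27 < C) :
    ∃ r₁ r₂ : ℝ, 0 < r₁ ∧ r₁ < 1 ∧ 1 < r₂ ∧
      C * r₁ ^ 4 = (1 + 2 * r₁ ^ 2) ^ 3 ∧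
      C * r₂ ^ 4 = (1 + 2 * r₂ ^ 2) ^ 3 ∧
      ∀ r : ℝ, 0 < r → C * r ^ 4 = (1 + 2 * r ^ 2) ^ 3 → r = r₁ ∨ r = r₂ := by
  obtain ⟨r₁, hr₁0, hr₁1, hf₁⟩ := exists_lt_one_profileConstant_eq hC
  obtain ⟨r₂, hr₂1, hf₂⟩ := exists_one_lt_profileConstant_eq hC
  have hr₂0 : 0 < r₂ := zero_lt_one.trans hr₂1
  refine ⟨r₁, r₂, hr₁0, hr₁1, hr₂1, (profileConstant_eq_iff hr₁0.ne').1 hf₁,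
    (profileConstant_eq_iff hr₂0.ne').1 hf₂, fun r hr0 hr => ?_⟩
  have hf : profileConstant r = C := (profileConstant_eq_iff hr0.ne').2 hr
  rcases lt_trichotomy r 1 with hr1 | rfl | hr1
  · exact .inl <| strictAntiOn_profileConstant.injOn ⟨hr0, hr1.le⟩ ⟨hr₁0, hr₁1.le⟩
      (hf.trans hf₁.symm)
  · exact absurd (profileConstant_one ▸ hf) hC.ne
  · exact .inr <| strictMonoOn_profileConstant.injOn hr1.le hr₂1.le (hf.trans hf₂.symm)
end

section
/- Let q(x) = (1 − e^{2x})/(1 + 2e^{2x}) and, for a constant C, let G(x) = C e^{4x}/(1+2e^{2x})³. If f : ℝ → ℝ is twice differentiable and satisfies f''(s) = 2 q(f(s)) (f'(s)² + 1) for all s, then the function E(s) = f'(s)² − G(f(s)) + 1 satisfies E'(s) = 4 q(f(s)) f'(s) E(s) for all s. -/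
/-!
With `u = e^{2x}` one has `G = C u² / (1 + 2u)³`, whose logarithmic derivative is
`4 - 12u / (1 + 2u) = 4 q`, i.e. `G' = 4 G q`. Along a solution of the ODE,
`E' = 2 f' f'' - G'(f) f' = 4 q(f) f' (f'² + 1) - 4 q(f) G(f) f' = 4 q(f) f' E`.
-/

open Real

theorem hasDerivAt_energy_of_ode {q G f f' f'' : ℝ → ℝ} {s : ℝ}
    (hG : HasDerivAt G (4 * G (f s) * q (f s)) (f s))
    (hf : HasDerivAt f (f' s) s) (hf' : HasDerivAt f' (f'' s) s)
    (hode : f'' s = 2 * q (f s) * (f' s ^ 2 + 1)) :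
    HasDerivAt (fun t => f' t ^ 2 - G (f t) + 1)
      (4 * q (f s) * f' s * (f' s ^ 2 - G (f s) + 1)) s := by
  refine (((hf'.fun_pow 2).sub (hG.comp s hf)).add_const 1).congr_deriv ?_
  rw [hode]
  ring

theorem hasDerivAt_const_mul_exp_div_cube (C x : ℝ) :
    HasDerivAt (fun y => C * exp (4 * y) / (1 + 2 * exp (2 * y)) ^ 3)
      (4 * (C * exp (4 * x) / (1 + 2 * exp (2 * x)) ^ 3) *
        ((1 - exp (2 * x)) / (1 + 2 * exp (2 * x)))) x := by
  have hnum : HasDerivAt (fun y => C * exp (4 * y)) (C * (exp (4 * x) * 4)) x := by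
    simpa using (((hasDerivAt_id x).const_mul 4).exp.const_mul C)
  have hden : HasDerivAt (fun y => 1 + 2 * exp (2 * y)) (2 * (exp (2 * x) * 2)) x := by
    simpa using (((hasDerivAt_id x).const_mul 2).exp.const_mul 2).const_add 1
  have hpos : 0 < 1 + 2 * exp (2 * x) := by positivity
  refine (hnum.fun_div (hden.fun_pow 3) (pow_ne_zero 3 hpos.ne')).congr_deriv ?_
  have hexp : exp (4 * x) = exp (2 * x) ^ 2 := by rw [← exp_nat_mul]; ring_nf
  rw [hexp]
  field_simp
  ring

theorem energy_derivative (C : ℝ)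
    (q G : ℝ → ℝ)
    (hq : ∀ x, q x = (1 - exp (2 * x)) / (1 + 2 * exp (2 * x)))
    (hG : ∀ x, G x = C * exp (4 * x) / (1 + 2 * exp (2 * x)) ^ 3)
    (f f' f'' : ℝ → ℝ)
    (hf : ∀ s, HasDerivAt f (f' s) s)
    (hf' : ∀ s, HasDerivAt f' (f'' s) s)
    (hode : ∀ s, f'' s = 2 * q (f s) * ((f' s) ^ 2 + 1))
    (E : ℝ → ℝ) (hE : ∀ s, E s = (f' s) ^ 2 - G (f s) + 1) :
    ∀ s, HasDerivAt E (4 * q (f s) * f' s * E s) s := by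
  intro s
  have hGd : HasDerivAt G (4 * G (f s) * q (f s)) (f s) := by
    rw [funext hG, hq]
    exact hasDerivAt_const_mul_exp_div_cube C (f s)
  rw [funext hE]
  exact hasDerivAt_energy_of_ode hGd (hf s) (hf' s) (hode s)
end

section
/- Let q(x) = (1 − e^{2x})/(1 + 2e^{2x}) and G(x) = C e^{4x}/(1+2e^{2x})³ for a constant C. If f : ℝ → ℝ is twice differentiable, satisfies f''(s) = 2 q(f(s)) (f'(s)² + 1) for all s, and f'(0)² = G(f(0)) − 1, then f'(s)² = G(f(s)) − 1 for all s ∈ ℝ. -/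
/-!
Both `f' ^ 2 + 1` and `W ∘ f`, where `W x = exp (4 x) / (1 + 2 exp (2 x)) ^ 3` and `G = C W`,
solve the same linear equation `y' = 4 q(f) f' y`: the first by the ODE, the second because
`(log W)' = 4 q`. Hence their ratio is constant, and the initial condition fixes it to be `C`.
-/

open Real

theorem div_eq_div_of_hasDerivAt_mul {u v a : ℝ → ℝ}
    (hu : ∀ s, HasDerivAt u (a s * u s) s) (hv : ∀ s, HasDerivAt v (a s * v s) s)
    (hv₀ : ∀ s, v s ≠ 0) (s t : ℝ) : u s / v s = u t / v t := by
  have hderiv : ∀ x, HasDerivAt (fun x => u x / v x) 0 x := fun x =>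
    ((hu x).div (hv x) (hv₀ x)).congr_deriv (by ring)
  exact is_const_of_deriv_eq_zero (fun x => (hderiv x).differentiableAt)
    (fun x => (hderiv x).deriv) s t

noncomputable def weight (x : ℝ) : ℝ := exp (4 * x) / (1 + 2 * exp (2 * x)) ^ 3

theorem weight_pos (x : ℝ) : 0 < weight x := by
  unfold weight
  positivity

theorem hasDerivAt_weight (x : ℝ) :
    HasDerivAt weight (4 * ((1 - exp (2 * x)) / (1 + 2 * exp (2 * x))) * weight x) x := by
  have hden : HasDerivAt (fun x => (1 + 2 * exp (2 * x)) ^ 3)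
      (3 * (1 + 2 * exp (2 * x)) ^ 2 * (2 * (exp (2 * x) * 2))) x := by
    simpa using ((((hasDerivAt_id x).const_mul 2).exp.const_mul 2).const_add 1).fun_pow 3
  have hnum : HasDerivAt (fun x => exp (4 * x)) (exp (4 * x) * 4) x := by
    simpa using ((hasDerivAt_id x).const_mul 4).exp
  refine (hnum.div hden (by positivity)).congr_deriv ?_
  unfold weight
  field_simp
  ring

theorem first_integral_invariant (C : ℝ)
    (q G : ℝ → ℝ)
    (hq : ∀ x, q x = (1 - exp (2 * x)) / (1 + 2 * exp (2 * x)))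
    (hG : ∀ x, G x = C * exp (4 * x) / (1 + 2 * exp (2 * x)) ^ 3)
    (f f' f'' : ℝ → ℝ)
    (hf : ∀ s, HasDerivAt f (f' s) s)
    (hf' : ∀ s, HasDerivAt f' (f'' s) s)
    (hode : ∀ s, f'' s = 2 * q (f s) * ((f' s) ^ 2 + 1))
    (h0 : (f' 0) ^ 2 = G (f 0) - 1) :
    ∀ s : ℝ, (f' s) ^ 2 = G (f s) - 1 := by
  have hGW : ∀ x, G x = C * weight x := fun x => by rw [hG, weight, mul_div_assoc]
  have hu : ∀ s, HasDerivAt (fun s => f' s ^ 2 + 1)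
      (4 * q (f s) * f' s * (f' s ^ 2 + 1)) s := fun s =>
    (((hf' s).fun_pow 2).add_const 1).congr_deriv (by rw [hode]; ring)
  have hv : ∀ s, HasDerivAt (fun s => weight (f s))
      (4 * q (f s) * f' s * weight (f s)) s := fun s =>
    ((hasDerivAt_weight (f s)).comp s (hf s)).congr_deriv (by rw [hq]; ring)
  intro s
  have hratio := div_eq_div_of_hasDerivAt_mul hu hv (fun s => (weight_pos (f s)).ne') s 0
  rw [h0, hGW, sub_add_cancel, mul_div_cancel_right₀ _ (weight_pos (f 0)).ne',
    div_eq_iff (weight_pos (f s)).ne'] at hratio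
  rw [hGW]
  linarith
end
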